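/- arXiv:2305.00186 — 9 statements merged into one kernel-verified Lean document; each statement's English description precedes it below -/
import Mathlib

section
/- Let δ ∈ [0,1) and d, w > 0 with d·w > 1-δ. Define A(d,w,δ) = (1-δ)·d^w·(w+1)^(w+1)/(dw - (1-δ))^(w+1). Then the partial derivative of A with respect to d is strictly negative and the partial derivative of A with respect to w is strictly negative. -/
/-- The critical-fugacity function of the bipartite hardcore model. -/
noncomputable def A (d w δ : ℝ) : ℝ :=
  (1 - δ) * d ^ w * (w + 1) ^ (w + 1) / (d * w - (1 - δ)) ^ (w + 1)

/-!
On the region `d > 0`, `w > -1`, `u := d w - (1 - δ) > 0`, the function `A` is the exponential of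
`log A = log (1 - δ) + w log d + (w + 1) log (w + 1) - (w + 1) log u`, so each partial derivative
of `A` is `A` times the corresponding partial derivative of `log A`. In `d` the latter is
`w / d - (w + 1) w / u = -w (d + 1 - δ) / (d u)`. In `w` it is `log t + 1 - t` with
`t = d (w + 1) / u`, which is negative since `t ≠ 1` (indeed `d (w + 1) - u = d + 1 - δ > 0`).
-/

open Real Filter Topology

theorem deriv_eq_exp_mul_of_eventuallyEq {f g : ℝ → ℝ} {x g' : ℝ} (hg : HasDerivAt g g' x)
    (hfg : f =ᶠ[𝓝 x] fun y => exp (g y)) : deriv f x = exp (g x) * g' :=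
  (hg.exp.congr_of_eventuallyEq hfg).deriv

noncomputable def logA (d w δ : ℝ) : ℝ :=
  log (1 - δ) + w * log d + (w + 1) * log (w + 1) - (w + 1) * log (d * w - (1 - δ))

section

variable {d w δ : ℝ}

theorem A_eq_exp_logA (hδ : δ < 1) (hd : 0 < d) (hw : 0 < w + 1) (hdw : 1 - δ < d * w) :
    A d w δ = exp (logA d w δ) := by
  rw [A, logA, exp_sub, exp_add, exp_add, exp_log (by linarith), rpow_def_of_pos hd,
    rpow_def_of_pos hw, rpow_def_of_pos (by linarith)]
  simp only [mul_comm (log _)]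

theorem eventuallyEq_A_exp_logA {f g : ℝ → ℝ} {x : ℝ} (hf : ContinuousAt f x)
    (hg : ContinuousAt g x) (hδ : δ < 1) (hd : 0 < f x) (hw : 0 < g x + 1)
    (hdw : 1 - δ < f x * g x) :
    (fun y => A (f y) (g y) δ) =ᶠ[𝓝 x] fun y => exp (logA (f y) (g y) δ) := by
  filter_upwards [continuousAt_const.eventually_lt hf hd,
    continuousAt_const.eventually_lt (hg.add continuousAt_const) hw,
    continuousAt_const.eventually_lt (hf.mul hg) hdw] with y hdy hwy hdwy
  exact A_eq_exp_logA hδ hdy hwy hdwy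

theorem hasDerivAt_logA_d (hd : 0 < d) (hdw : 1 - δ < d * w) :
    HasDerivAt (fun d' => logA d' w δ) (w / d - (w + 1) * w / (d * w - (1 - δ))) d := by
  have hu : d * w - (1 - δ) ≠ 0 := by linarith
  have h := ((((hasDerivAt_log hd.ne').const_mul w).const_add (log (1 - δ))).add_const
    ((w + 1) * log (w + 1))).sub
    (((((hasDerivAt_id d).mul_const w).sub_const (1 - δ)).log hu).const_mul (w + 1))
  exact h.congr_deriv (by simp only [id]; field_simp)

theorem hasDerivAt_logA_w (hw : 0 < w + 1) (hdw : 1 - δ < d * w) :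
    HasDerivAt (fun w' => logA d w' δ)
      (log d + log (w + 1) + 1 - log (d * w - (1 - δ)) - (w + 1) * d / (d * w - (1 - δ))) w := by
  have hu : d * w - (1 - δ) ≠ 0 := by linarith
  have hw1 : HasDerivAt (fun w' : ℝ => w' + 1) 1 w := (hasDerivAt_id w).add_const 1
  have h := ((((hasDerivAt_id w).mul_const (log d)).const_add (log (1 - δ))).add
    (hw1.mul (hw1.log hw.ne'))).sub
    (hw1.mul ((((hasDerivAt_id w).const_mul d).sub_const (1 - δ)).log hu))
  exact h.congr_deriv (by simp only [id]; field_simp; ring)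

theorem logA_deriv_d_neg (hδ : δ < 1) (hd : 0 < d) (hw : 0 < w) (hdw : 1 - δ < d * w) :
    w / d - (w + 1) * w / (d * w - (1 - δ)) < 0 := by
  have hu : 0 < d * w - (1 - δ) := by linarith
  rw [sub_neg, div_lt_div_iff₀ hd hu]
  nlinarith

theorem logA_deriv_w_neg (hδ : δ < 1) (hd : 0 < d) (hw : 0 < w + 1) (hdw : 1 - δ < d * w) :
    log d + log (w + 1) + 1 - log (d * w - (1 - δ)) - (w + 1) * d / (d * w - (1 - δ)) < 0 := by
  have hu : 0 < d * w - (1 - δ) := by linarith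
  set t := d * (w + 1) / (d * w - (1 - δ)) with ht
  have ht_ne_one : t ≠ 1 := by
    rw [ht, ne_eq, div_eq_one_iff_eq hu.ne']
    linarith
  have hlog_t : log t = log d + log (w + 1) - log (d * w - (1 - δ)) := by
    rw [ht, log_div (by positivity) hu.ne', log_mul hd.ne' hw.ne']
  have hlog_lt := log_lt_sub_one_of_pos (by positivity) ht_ne_one
  rw [hlog_t, ht] at hlog_lt
  rw [mul_comm (w + 1) d]
  linarith

end

theorem stmt4_general (δ d w : ℝ) (hδ1 : δ < 1) (hd : 0 < d) (hw : 0 < w)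
    (hdw : 1 - δ < d * w) :
    deriv (fun d' => A d' w δ) d < 0 ∧ deriv (fun w' => A d w' δ) w < 0 := by
  have hw1 : 0 < w + 1 := by linarith
  rw [deriv_eq_exp_mul_of_eventuallyEq (hasDerivAt_logA_d hd hdw)
      (eventuallyEq_A_exp_logA (f := fun y => y) (g := fun _ => w)
        continuousAt_id continuousAt_const hδ1 hd hw1 hdw),
    deriv_eq_exp_mul_of_eventuallyEq (hasDerivAt_logA_w hw1 hdw)
      (eventuallyEq_A_exp_logA (f := fun _ => d) (g := fun y => y)
        continuousAt_const continuousAt_id hδ1 hd hw1 hdw)]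
  exact ⟨mul_neg_of_pos_of_neg (exp_pos _) (logA_deriv_d_neg hδ1 hd hw hdw),
    mul_neg_of_pos_of_neg (exp_pos _) (logA_deriv_w_neg hδ1 hd hw1 hdw)⟩

/-- If `dw > 1-δ`, both partial derivatives of `A(d,w,δ)` (in `d` and in `w`)
are strictly negative. -/
theorem stmt4 (δ d w : ℝ) (hδ0 : 0 ≤ δ) (hδ1 : δ < 1) (hd : 0 < d) (hw : 0 < w)
    (hdw : 1 - δ < d * w) :
    deriv (fun d' => A d' w δ) d < 0 ∧ deriv (fun w' => A d w' δ) w < 0 :=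
  stmt4_general δ d w hδ1 hd hw hdw
end

section
/- Let d, w > 0 with d·w > 1 and d < w. Then A(d,w,0) > A(w,d,0), where A(d,w,0) = d^w·(w+1)^(w+1)/(dw-1)^(w+1). Symmetrically, if d > w and dw > 1, then A(d,w,0) < A(w,d,0). -/
/-!
With `s = dw - 1`, `u = (d + 1)/s` and `v = (w + 1)/s` one has `dv = 1 + u` and `wu = 1 + v`,
so `A(d,w,0) = (dv)^w v = (1 + u)^w v` and `A(w,d,0) = (1 + v)^d u`. Taking logarithms and
substituting `d = (1 + u)/v`, `w = (1 + v)/u`, the comparison for `u < v` (equivalently `d < w`)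
follows from `log u < log v` together with the fact that the chord slope `log (1 + t) / t` of the
strictly concave logarithm is strictly decreasing.
-/

open Real

lemma log_one_add_div_lt_log_one_add_div {u v : ℝ} (hu : 0 < u) (huv : u < v) :
    log (1 + v) / v < log (1 + u) / u := by
  have h := strictConcaveOn_log_Ioi.secant_strict_mono (a := 1) (x := 1 + u) (y := 1 + v)
    (Set.mem_Ioi.mpr one_pos) (Set.mem_Ioi.mpr (by linarith)) (Set.mem_Ioi.mpr (by linarith))
    (by linarith) (by linarith) (by linarith)
  simpa only [log_one, sub_zero, add_sub_cancel_left] using h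

lemma one_add_rpow_mul_lt {u v d w : ℝ} (hu : 0 < u) (huv : u < v)
    (hdv : d * v = 1 + u) (hwu : w * u = 1 + v) :
    (1 + v) ^ d * u < (1 + u) ^ w * v := by
  have hv : 0 < v := hu.trans huv
  have hslope := log_one_add_div_lt_log_one_add_div hu huv
  have hd : d * log (1 + v) = (1 + u) * (log (1 + v) / v) := by
    rw [← hdv]; field_simp
  have hw : w * log (1 + u) = (1 + v) * (log (1 + u) / u) := by
    rw [← hwu]; field_simp
  have hexp : d * log (1 + v) ≤ w * log (1 + u) := by
    rw [hd, hw]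
    exact mul_le_mul (by linarith) hslope.le
      (div_nonneg (log_nonneg (by linarith)) hv.le) (by linarith)
  rw [← log_lt_log_iff (by positivity) (by positivity), log_mul (by positivity) hu.ne',
    log_mul (by positivity) hv.ne', log_rpow (by linarith), log_rpow (by linarith)]
  linarith [log_lt_log hu huv]

lemma rpow_mul_rpow_div_rpow_eq {a b s : ℝ} (ha : 0 ≤ a) (hb : 0 < b + 1) (hs : 0 < s) :
    a ^ b * (b + 1) ^ (b + 1) / s ^ (b + 1) = (a * ((b + 1) / s)) ^ b * ((b + 1) / s) := by
  rw [mul_div_assoc, ← div_rpow hb.le hs.le, rpow_add_one (div_pos hb hs).ne',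
    mul_rpow ha (div_pos hb hs).le, mul_assoc]

lemma swap_threshold_lt {d w : ℝ} (hd : 0 < d) (hdw : 1 < d * w) (hlt : d < w) :
    w ^ d * (d + 1) ^ (d + 1) / (d * w - 1) ^ (d + 1)
      < d ^ w * (w + 1) ^ (w + 1) / (d * w - 1) ^ (w + 1) := by
  have hw : 0 < w := hd.trans hlt
  set s := d * w - 1 with hs_def
  have hs : 0 < s := by linarith
  have hdv : d * ((w + 1) / s) = 1 + (d + 1) / s := by field_simp; ring
  have hwu : w * ((d + 1) / s) = 1 + (w + 1) / s := by field_simp; ring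
  rw [rpow_mul_rpow_div_rpow_eq hw.le (by linarith) hs,
    rpow_mul_rpow_div_rpow_eq hd.le (by linarith) hs, hdv, hwu]
  exact one_add_rpow_mul_lt (by positivity) (by gcongr) hdv hwu

/-- Comparison of the threshold function `A(d,w,0) = d^w (w+1)^(w+1)/(dw-1)^(w+1)`
with its swap `A(w,d,0)`: if `dw > 1` and `d < w` then `A(d,w,0) > A(w,d,0)`, and
symmetrically if `d > w` then `A(d,w,0) < A(w,d,0)`. -/
theorem stmt5 (d w : ℝ) (hd : 0 < d) (hw : 0 < w) (hdw : 1 < d * w) :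
    (d < w → w ^ d * (d + 1) ^ (d + 1) / (d * w - 1) ^ (d + 1)
        < d ^ w * (w + 1) ^ (w + 1) / (d * w - 1) ^ (w + 1)) ∧
    (w < d → d ^ w * (w + 1) ^ (w + 1) / (d * w - 1) ^ (w + 1)
        < w ^ d * (d + 1) ^ (d + 1) / (d * w - 1) ^ (d + 1)) := by
  refine ⟨swap_threshold_lt hd hdw, fun hlt => ?_⟩
  rw [mul_comm d w] at hdw ⊢
  exact swap_threshold_lt hw hdw hlt
end

section
/- Let d ≥ 1 and w > 0 with dw > 1, and suppose (x,w) with x > 0 satisfies the system (x+1)(α + (1+x)^w) = α·d·w·x and α·d = (1+x)^(w+1). Then x = (d+1)/(dw-1), α = d^w(w+1)^(w+1)/(dw-1)^(w+1), and λ(x) := x·(1 + α(1+x)^(-w))^d = w^d(d+1)^(d+1)/(dw-1)^(d+1). -/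
/-- Solving the critical system `T_0 = 0`, `M_0 = 0` of the bipartite hardcore model:
if `(x+1)(α + (1+x)^w) = α d w x` and `α d = (1+x)^(w+1)` with `x > 0`, `d ≥ 1`,
`dw > 1`, then `x = (d+1)/(dw-1)`, `α = d^w (w+1)^(w+1)/(dw-1)^(w+1)`, and
`λ(x) = x (1 + α(1+x)^(-w))^d = w^d (d+1)^(d+1)/(dw-1)^(d+1)`. -/
theorem stmt6 (d w α x : ℝ) (hd : 1 ≤ d) (hw : 0 < w) (hdw : 1 < d * w)
    (hα : 0 < α) (hx : 0 < x)
    (h1 : (x + 1) * (α + (1 + x) ^ w) = α * d * w * x)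
    (h2 : α * d = (1 + x) ^ (w + 1)) :
    x = (d + 1) / (d * w - 1) ∧
    α = d ^ w * (w + 1) ^ (w + 1) / (d * w - 1) ^ (w + 1) ∧
    x * (1 + α * (1 + x) ^ (-w)) ^ d = w ^ d * (d + 1) ^ (d + 1) / (d * w - 1) ^ (d + 1) := by
  have hdpos : (0:ℝ) < d := lt_of_lt_of_le one_pos hd
  have h1x : (0:ℝ) < 1 + x := by linarith
  have hdw1 : (0:ℝ) < d * w - 1 := by linarith
  have hP : (0:ℝ) < (1 + x) ^ w := Real.rpow_pos_of_pos h1x w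
  have hPw1 : (1 + x) ^ (w + 1) = (1 + x) ^ w * (1 + x) := by
    rw [Real.rpow_add h1x, Real.rpow_one]
  have h2' : α * d = (1 + x) ^ w * (1 + x) := by rw [h2, hPw1]
  -- key linear relation
  have hprod : ((1 + x) ^ w * (1 + x)) * ((1 + x) + d)
      = ((1 + x) ^ w * (1 + x)) * (d * w * x) := by
    linear_combination d * h1 - ((x + 1) - d * w * x) * h2'
  have key : (1 + x) + d = d * w * x :=
    mul_left_cancel₀ (by positivity) hprod
  have hxeq : x = (d + 1) / (d * w - 1) := by
    field_simp
    linarith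
  have h1xeq : 1 + x = d * (w + 1) / (d * w - 1) := by
    rw [hxeq]; field_simp; ring
  -- α
  have hαeq : α = d ^ w * (w + 1) ^ (w + 1) / (d * w - 1) ^ (w + 1) := by
    have hαd : α = (1 + x) ^ (w + 1) / d := by
      field_simp at h2 ⊢; linarith [h2]
    rw [hαd, h1xeq, Real.div_rpow (by positivity) hdw1.le,
      Real.mul_rpow hdpos.le (by positivity : (0:ℝ) ≤ w + 1),
      Real.rpow_add hdpos, Real.rpow_one]
    field_simp
  refine ⟨hxeq, hαeq, ?_⟩
  -- λ(x)
  have hstep : α * (1 + x) ^ (-w) = (1 + x) / d := by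
    have hαd : α = (1 + x) ^ (w + 1) / d := by
      field_simp at h2 ⊢; linarith [h2]
    have e : (1 + x) ^ (w + 1) * (1 + x) ^ (-w) = 1 + x := by
      rw [← Real.rpow_add h1x]
      norm_num
    rw [hαd, div_mul_eq_mul_div, e]
  have hA : 1 + α * (1 + x) ^ (-w) = w * (d + 1) / (d * w - 1) := by
    rw [hstep, h1xeq]
    field_simp
    ring
  rw [hA, hxeq, Real.div_rpow (by positivity) hdw1.le,
    Real.mul_rpow hw.le (by positivity : (0:ℝ) ≤ d + 1)]
  have e1 : (d + 1) ^ (d + 1) = (d + 1) ^ d * (d + 1) := by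
    rw [Real.rpow_add (by positivity), Real.rpow_one]
  have e2 : (d * w - 1) ^ (d + 1) = (d * w - 1) ^ d * (d * w - 1) := by
    rw [Real.rpow_add hdw1, Real.rpow_one]
  rw [e1, e2]
  have hp1 : (0:ℝ) < (d + 1) ^ d := Real.rpow_pos_of_pos (by positivity) d
  have hp2 : (0:ℝ) < (d * w - 1) ^ d := Real.rpow_pos_of_pos hdw1 d
  field_simp
end

section
/- Let δ ∈ [0,1), d ≥ 1-δ, α, w > 0 with α(dw-(1-δ)) ≥ (1-δ)(1+w), and let y = (α(dw-(1-δ))/((1-δ)(1+w)))^(1/w) - 1 be the unique critical point of T_δ(x) = (1-δ)(x+1)(α+(1+x)^w) - αdwx. Then T_δ(y) > 0 if and only if α < (1-δ)d^w(w+1)^(w+1)/(dw-(1-δ))^(w+1), T_δ(y) = 0 iff equality holds, and T_δ(y) < 0 iff α exceeds this threshold. -/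
/-- Sign of `T_δ` at its unique critical point `y` is determined by comparing `α`
with the threshold `(1-δ) d^w (w+1)^(w+1)/(dw-(1-δ))^(w+1)`. -/
theorem stmt9 (δ d w α : ℝ) (hδ0 : 0 ≤ δ) (hδ1 : δ < 1) (hd : 1 - δ ≤ d) (hα : 0 < α)
    (hw : 0 < w) (hy : (1 - δ) * (1 + w) ≤ α * (d * w - (1 - δ))) :
    let y : ℝ := (α * (d * w - (1 - δ)) / ((1 - δ) * (1 + w))) ^ (1 / w) - 1
    let T : ℝ → ℝ := fun x => (1 - δ) * (x + 1) * (α + (1 + x) ^ w) - α * d * w * x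
    (0 < T y ↔ α < (1 - δ) * d ^ w * (w + 1) ^ (w + 1) / (d * w - (1 - δ)) ^ (w + 1)) ∧
    (T y = 0 ↔ α = (1 - δ) * d ^ w * (w + 1) ^ (w + 1) / (d * w - (1 - δ)) ^ (w + 1)) ∧
    (T y < 0 ↔ (1 - δ) * d ^ w * (w + 1) ^ (w + 1) / (d * w - (1 - δ)) ^ (w + 1) < α) := by
  intro y T
  have hc : 0 < 1 - δ := by linarith
  have hw1 : 0 < 1 + w := by linarith
  have hs : 0 < d * w - (1 - δ) := by
    nlinarith [mul_pos hc hw1]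
  have hdpos : 0 < d := by nlinarith
  set s : ℝ := d * w - (1 - δ) with hsdef
  have hb : 0 < α * s / ((1 - δ) * (1 + w)) := by positivity
  set u : ℝ := (α * s / ((1 - δ) * (1 + w))) ^ (1 / w) with hudef
  have hu0 : 0 < u := Real.rpow_pos_of_pos hb _
  have huw : u ^ w = α * s / ((1 - δ) * (1 + w)) := by
    rw [hudef, one_div, Real.rpow_inv_rpow hb.le hw.ne']
  -- the value of T at y
  have hTy : T y = α * w / (1 + w) * (d * (1 + w) - u * s) := by
    show (1 - δ) * (u - 1 + 1) * (α + (1 + (u - 1)) ^ w) - α * d * w * (u - 1) = _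
    have h1 : u - 1 + 1 = u := by ring
    have h2 : 1 + (u - 1) = u := by ring
    rw [h1, h2, huw]
    field_simp
    ring
  -- the right-hand side target
  have htw : (d * (1 + w) / s) ^ w = d ^ w * (1 + w) ^ w / s ^ w := by
    rw [Real.div_rpow (by positivity) hs.le, Real.mul_rpow hdpos.le hw1.le]
  have hK : (1 - δ) * d ^ w * (w + 1) ^ (w + 1) / s ^ (w + 1)
      = (1 - δ) * d ^ w * ((w + 1) ^ w * (w + 1)) / (s ^ w * s) := by
    rw [Real.rpow_add_one (by positivity), Real.rpow_add_one hs.ne']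
  have hw1' : (w : ℝ) + 1 = 1 + w := by ring
  have hswpos : 0 < s ^ w := Real.rpow_pos_of_pos hs _
  -- main strict comparisons
  have hmainlt : u * s < d * (1 + w) ↔
      α < (1 - δ) * d ^ w * (w + 1) ^ (w + 1) / s ^ (w + 1) := by
    rw [hK, hw1', ← lt_div_iff₀ hs,
      ← Real.rpow_lt_rpow_iff hu0.le (by positivity) hw, huw, htw,
      div_lt_div_iff₀ (by positivity) hswpos, lt_div_iff₀ (by positivity)]
    constructor <;> intro h <;> nlinarith
  have hmaingt : d * (1 + w) < u * s ↔
      (1 - δ) * d ^ w * (w + 1) ^ (w + 1) / s ^ (w + 1) < α := by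
    rw [hK, hw1', ← div_lt_iff₀ hs,
      ← Real.rpow_lt_rpow_iff (by positivity) hu0.le hw, huw, htw,
      div_lt_div_iff₀ hswpos (by positivity), div_lt_iff₀ (by positivity)]
    constructor <;> intro h <;> nlinarith
  have hcoef : 0 < α * w / (1 + w) := by positivity
  have hpos : 0 < T y ↔ α < (1 - δ) * d ^ w * (w + 1) ^ (w + 1) / s ^ (w + 1) := by
    rw [hTy, ← hmainlt, mul_pos_iff_of_pos_left hcoef, sub_pos]
  have hTy' : -T y = α * w / (1 + w) * (u * s - d * (1 + w)) := by rw [hTy]; ring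
  have hneg : T y < 0 ↔ (1 - δ) * d ^ w * (w + 1) ^ (w + 1) / s ^ (w + 1) < α := by
    rw [← neg_pos, hTy', mul_pos_iff_of_pos_left hcoef, sub_pos, hmaingt]
  refine ⟨hpos, ?_, hneg⟩
  constructor
  · intro h
    rcases lt_trichotomy α ((1 - δ) * d ^ w * (w + 1) ^ (w + 1) / s ^ (w + 1)) with h' | h' | h'
    · exact absurd (hpos.2 h') (by rw [h]; exact lt_irrefl 0)
    · exact h'
    · exact absurd (hneg.2 h') (by rw [h]; exact lt_irrefl 0)
  · intro h
    rcases lt_trichotomy (T y) 0 with h' | h' | h'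
    · exact absurd (hneg.1 h') (by rw [h]; exact lt_irrefl _)
    · exact h'
    · exact absurd (hpos.1 h') (by rw [h]; exact lt_irrefl _)
end

section
/- Fix α > 0 and let R(x) = ((e^x - 1)/e^x)·log(α/(e^x - 1)). Then R is concave on the interval [0, log(1+α)]; more precisely R''(x) = 1/(1-e^x) - e^(-x)·log(α/(e^x-1)) < 0 for x ∈ (0, log(1+α)]. -/
/-!
Since `(e^x - 1)/e^x = 1 - e^{-x}`, two applications of the product rule give
`R' = e^{-x} log(α/(e^x - 1)) - 1` and the stated `R''`. For `0 < x ≤ log(1 + α)` we have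
`0 < e^x - 1 ≤ α`, so `1/(1 - e^x) < 0` while the logarithm is nonnegative. Continuity at the
endpoint `0` comes from `t log t → 0`.
-/

open Real Set

namespace BipartiteHardcore

noncomputable def R (α x : ℝ) : ℝ := (exp x - 1) / exp x * log (α / (exp x - 1))

noncomputable def R' (α x : ℝ) : ℝ := exp (-x) * log (α / (exp x - 1)) - 1

noncomputable def R'' (α x : ℝ) : ℝ := 1 / (1 - exp x) - exp (-x) * log (α / (exp x - 1))

variable {α x : ℝ}

lemma exp_sub_one_ne_zero (hx : x ≠ 0) : exp x - 1 ≠ 0 :=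
  sub_ne_zero.mpr (mt (exp_eq_one_iff _).mp hx)

lemma R_eq_one_sub_exp_neg_mul (α x : ℝ) : R α x = (1 - exp (-x)) * log (α / (exp x - 1)) := by
  rw [R, exp_neg, sub_div, div_self (exp_ne_zero x), one_div]

lemma R_eq_of_ne_zero (hα : α ≠ 0) (x : ℝ) :
    R α x = (1 - exp (-x)) * log α - exp (-x) * ((exp x - 1) * log (exp x - 1)) := by
  rcases eq_or_ne x 0 with rfl | hx
  · simp [R]
  rw [R_eq_one_sub_exp_neg_mul, log_div hα (exp_sub_one_ne_zero hx), exp_neg]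
  field_simp

lemma continuous_R (hα : α ≠ 0) : Continuous (R α) := by
  rw [funext (R_eq_of_ne_zero hα)]
  have hexp_neg : Continuous fun y : ℝ => exp (-y) := continuous_exp.comp continuous_neg
  exact ((continuous_const.sub hexp_neg).mul continuous_const).sub
    (hexp_neg.mul (continuous_mul_log.comp (continuous_exp.sub continuous_const)))

lemma hasDerivAt_log_div_exp_sub_one (hα : α ≠ 0) (hx : x ≠ 0) :
    HasDerivAt (fun y => log (α / (exp y - 1))) (-(exp x / (exp x - 1))) x := by
  have hu := exp_sub_one_ne_zero hx
  have : HasDerivAt (fun y => log (α / (exp y - 1)))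
      ((0 * (exp x - 1) - α * exp x) / (exp x - 1) ^ 2 / (α / (exp x - 1))) x :=
    ((hasDerivAt_const x α).div ((hasDerivAt_exp x).sub_const 1) hu).log (div_ne_zero hα hu)
  convert this using 1
  field_simp
  ring

lemma hasDerivAt_exp_neg (x : ℝ) : HasDerivAt (fun y => exp (-y)) (-exp (-x)) x := by
  simpa using (hasDerivAt_neg x).exp

lemma hasDerivAt_R (hα : α ≠ 0) (hx : x ≠ 0) : HasDerivAt (R α) (R' α x) x := by
  rw [funext (R_eq_one_sub_exp_neg_mul α)]
  refine (((hasDerivAt_exp_neg x).const_sub 1).mul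
    (hasDerivAt_log_div_exp_sub_one hα hx)).congr_deriv ?_
  rw [R', exp_neg]
  field_simp [exp_sub_one_ne_zero hx]
  ring

lemma hasDerivAt_R' (hα : α ≠ 0) (hx : x ≠ 0) : HasDerivAt (R' α) (R'' α x) x := by
  refine (((hasDerivAt_exp_neg x).mul
    (hasDerivAt_log_div_exp_sub_one hα hx)).sub_const 1).congr_deriv ?_
  have : 1 - exp x ≠ 0 := by rw [← neg_sub, neg_ne_zero]; exact exp_sub_one_ne_zero hx
  rw [R'', exp_neg]
  field_simp [exp_sub_one_ne_zero hx]
  ring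

lemma hasDerivAt_deriv_R (hα : α ≠ 0) (hx : x ≠ 0) :
    HasDerivAt (deriv (R α)) (R'' α x) x := by
  refine (hasDerivAt_R' hα hx).congr_of_eventuallyEq ?_
  filter_upwards [isOpen_ne.mem_nhds hx] with y hy
  exact (hasDerivAt_R hα hy).deriv

lemma R''_neg (hα : 0 < α) (hx : x ∈ Ioc 0 (log (1 + α))) : R'' α x < 0 := by
  have hu : 0 < exp x - 1 := by linarith [add_one_lt_exp hx.1.ne', hx.1]
  have hu_le : exp x - 1 ≤ α := by
    linarith [(exp_le_exp.mpr hx.2).trans_eq (exp_log (by linarith : (0 : ℝ) < 1 + α))]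
  have hlog : 0 ≤ log (α / (exp x - 1)) := log_nonneg ((one_le_div hu).mpr hu_le)
  have hfirst : 1 / (1 - exp x) < 0 := one_div_neg.mpr (by linarith)
  have := mul_nonneg (exp_pos (-x)).le hlog
  rw [R'']
  linarith

end BipartiteHardcore

open BipartiteHardcore in
/-- `R(x) = ((e^x-1)/e^x) log(α/(e^x-1))` is concave on `[0, log(1+α)]`; more precisely
`R''(x) = 1/(1-e^x) - e^(-x) log(α/(e^x-1)) < 0` on `(0, log(1+α)]`. -/
theorem stmt10 (α : ℝ) (hα : 0 < α) :
    ConcaveOn ℝ (Set.Icc 0 (Real.log (1 + α)))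
      (fun x => (Real.exp x - 1) / Real.exp x * Real.log (α / (Real.exp x - 1))) ∧
    ∀ x ∈ Set.Ioc 0 (Real.log (1 + α)),
      deriv (deriv (fun x => (Real.exp x - 1) / Real.exp x * Real.log (α / (Real.exp x - 1)))) x
          = 1 / (1 - Real.exp x) - Real.exp (-x) * Real.log (α / (Real.exp x - 1)) ∧
      1 / (1 - Real.exp x) - Real.exp (-x) * Real.log (α / (Real.exp x - 1)) < 0 := by
  change ConcaveOn ℝ _ (R α) ∧ ∀ x ∈ _, deriv (deriv (R α)) x = R'' α x ∧ R'' α x < 0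
  refine ⟨?_, fun x hx => ⟨(hasDerivAt_deriv_R hα.ne' hx.1.ne').deriv, R''_neg hα hx⟩⟩
  refine concaveOn_of_deriv2_nonpos (convex_Icc _ _) (continuous_R hα.ne').continuousOn ?_ ?_ ?_
    <;> rw [interior_Icc]
  · exact fun x hx => (hasDerivAt_R hα.ne' hx.1.ne').differentiableAt.differentiableWithinAt
  · exact fun x hx => (hasDerivAt_deriv_R hα.ne' hx.1.ne').differentiableAt.differentiableWithinAt
  · intro x hx
    rw [Function.iterate_succ_apply, Function.iterate_one,
      (hasDerivAt_deriv_R hα.ne' hx.1.ne').deriv]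
    exact (R''_neg hα (Ioo_subset_Ioc_self hx)).le
end

section
/- Let α > 0, d a positive integer, and z_1, …, z_d ∈ [1, 1+α]. Let z = (∏_{k=1}^d z_k)^(1/d). Then ∑_{k=1}^d ((z_k - 1)/z_k)·log(α/(z_k - 1)) ≤ d·((z-1)/z)·log(α/(z-1)). -/
/-!
In the coordinate `x = log y` the summand `((y-1)/y) log(α/(y-1))` becomes
`g(x) = (1 - e⁻ˣ) log(α/(eˣ-1))`, whose derivative `e⁻ˣ log(α/(eˣ-1)) - 1` is a product of two
nonnegative decreasing functions on `(0, log(1+α))`. So `g` is concave on `[0, log(1+α)]`, and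
Jensen's inequality at the points `log z_k`, whose mean is the logarithm of the geometric mean,
is the claim.
-/

open Real Set

/-- `x ↦ (1 - e⁻ˣ) log(α/(eˣ-1))`, written with `negMulLog` so that it is visibly continuous at
`x = 0`, where it takes the value `0` of the convention. -/
noncomputable def decayTerm (α x : ℝ) : ℝ :=
  (1 - exp (-x)) * log α + exp (-x) * negMulLog (exp x - 1)

lemma hasDerivAt_decayTerm (α : ℝ) {x : ℝ} (hx : 0 < x) :
    HasDerivAt (decayTerm α) (exp (-x) * (log α - log (exp x - 1)) - 1) x := by
  have hex : exp x - 1 ≠ 0 := (sub_pos.2 (one_lt_exp_iff.2 hx)).ne'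
  have hent : HasDerivAt (fun y => negMulLog (exp y - 1)) ((-log (exp x - 1) - 1) * exp x) x :=
    HasDerivAt.comp x (hasDerivAt_negMulLog hex) ((hasDerivAt_exp x).sub_const 1)
  have h : HasDerivAt (decayTerm α) _ x :=
    (((hasDerivAt_neg x).exp.const_sub 1).mul_const (log α)).add ((hasDerivAt_neg x).exp.mul hent)
  refine h.congr_deriv ?_
  have : exp (-x) * exp x = 1 := by rw [← exp_add, neg_add_cancel, exp_zero]
  simp only [negMulLog]
  linear_combination (-1) * this

lemma antitoneOn_deriv_decayTerm {α : ℝ} (hα : 0 < α) :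
    AntitoneOn (fun x => exp (-x) * (log α - log (exp x - 1)) - 1) (Ioo 0 (log (1 + α))) := by
  intro a ha b hb hab
  have hea : 0 < exp a - 1 := sub_pos.2 (one_lt_exp_iff.2 ha.1)
  have hbα : exp b - 1 ≤ α := by
    have := exp_lt_exp.2 hb.2; rw [exp_log (by linarith)] at this; linarith
  dsimp only
  gcongr ?_ * ?_ - 1
  · exact sub_nonneg.2 (log_le_log (by linarith [exp_le_exp.2 hab]) hbα)
  · gcongr
  · gcongr

lemma continuous_decayTerm (α : ℝ) : Continuous (decayTerm α) := by
  unfold decayTerm; fun_prop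

lemma concaveOn_decayTerm {α : ℝ} (hα : 0 < α) :
    ConcaveOn ℝ (Icc 0 (log (1 + α))) (decayTerm α) := by
  refine AntitoneOn.concaveOn_of_deriv (convex_Icc _ _) (continuous_decayTerm α).continuousOn
    ?_ ?_ <;> rw [interior_Icc]
  · exact fun x hx => (hasDerivAt_decayTerm α hx.1).differentiableAt.differentiableWithinAt
  · exact (antitoneOn_deriv_decayTerm hα).congr
      fun x hx => ((hasDerivAt_decayTerm α hx.1).deriv).symm

lemma decayTerm_log {α y : ℝ} (hα : 0 < α) (hy : 1 ≤ y) :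
    decayTerm α (log y) = (y - 1) / y * log (α / (y - 1)) := by
  rcases hy.eq_or_lt with rfl | hy
  · simp [decayTerm]
  have hy0 : 0 < y := by linarith
  rw [decayTerm, exp_neg, exp_log hy0, log_div hα.ne' (by linarith), negMulLog]
  field_simp
  ring

lemma log_prod_rpow_one_div {d : ℕ} {z : Fin d → ℝ} (hz : ∀ k, 0 < z k) :
    log ((∏ k, z k) ^ ((1 : ℝ) / d)) = ∑ k, (1 / (d : ℝ)) • log (z k) := by
  rw [log_rpow (Finset.prod_pos fun k _ => hz k), log_prod fun k _ => (hz k).ne',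
    Finset.mul_sum]
  rfl

/-- Symmetrization (Jensen) inequality: for `z_1, …, z_d ∈ [1, 1+α]` and
`z = (∏ z_k)^(1/d)`, one has
`∑_k ((z_k-1)/z_k) log(α/(z_k-1)) ≤ d ((z-1)/z) log(α/(z-1))`.
(The convention that a summand is `0` when `z_k = 1` is realized by Lean's
`x/0 = 0` and `log 0 = 0`.) -/
theorem stmt11 (α : ℝ) (hα : 0 < α) (d : ℕ) (hd : 0 < d) (z : Fin d → ℝ)
    (hz : ∀ k, z k ∈ Set.Icc (1 : ℝ) (1 + α)) :
    (∑ k, (z k - 1) / z k * Real.log (α / (z k - 1))) ≤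
      (d : ℝ) * (((∏ k, z k) ^ ((1 : ℝ) / d) - 1) / (∏ k, z k) ^ ((1 : ℝ) / d) *
        Real.log (α / ((∏ k, z k) ^ ((1 : ℝ) / d) - 1))) := by
  have hz0 : ∀ k, 0 < z k := fun k => by linarith [(hz k).1]
  have hlog : ∀ k ∈ Finset.univ, log (z k) ∈ Icc 0 (log (1 + α)) := fun k _ =>
    ⟨log_nonneg (hz k).1, log_le_log (hz0 k) (hz k).2⟩
  have hmean : 1 ≤ (∏ k, z k) ^ ((1 : ℝ) / d) :=
    one_le_rpow (Finset.one_le_prod fun k _ => (hz k).1) (by positivity)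
  have hweights : ∑ _k : Fin d, 1 / (d : ℝ) = 1 := by
    simp [Finset.card_univ, hd.ne']
  calc ∑ k, (z k - 1) / z k * log (α / (z k - 1))
      = d * ∑ k, (1 / (d : ℝ)) • decayTerm α (log (z k)) := by
        simp only [decayTerm_log hα (hz _).1, smul_eq_mul, ← Finset.mul_sum]
        field_simp
    _ ≤ d * decayTerm α (∑ k, (1 / (d : ℝ)) • log (z k)) := by
        gcongr
        exact (concaveOn_decayTerm hα).le_map_sum (by intros; positivity) hweights hlog
    _ = _ := by rw [← log_prod_rpow_one_div hz0, decayTerm_log hα hmean]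
end

section
/- Let φ(z) = 1/((z+1)·log(z+1)) for z > 0. Then for all 0 < x < y, it holds that y/x ≤ φ(x)/φ(y) ≤ (y/x)². -/
/-!
With `F z = (z + 1) * log (z + 1)` the ratio `φ x / φ y` is `F y / F x`, so the two bounds say that
`F z / z` is monotone and `F z / z ^ 2` is antitone on `z > 0`. The first is the slope of the convex
function `t * log t` between `1` and `z + 1`. The second is the product of the positive antitone
functions `(z + 1) / z` and `log (z + 1) / z`, the latter being the slope of the concave function
`log` between `1` and `z + 1`.
-/

open Real Set

lemma monotoneOn_add_one_mul_log_add_one_div :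
    MonotoneOn (fun z : ℝ => (z + 1) * log (z + 1) / z) (Ioi 0) := by
  intro x (hx : 0 < x) y (hy : 0 < y) hxy
  have h := convexOn_mul_log.secant_mono (a := 1) (x := x + 1) (y := y + 1)
    (by simp) (by simp; linarith) (by simp; linarith) (by simpa using hx.ne')
    (by simpa using hy.ne') (by linarith)
  simpa using h

lemma antitoneOn_log_add_one_div : AntitoneOn (fun z : ℝ => log (z + 1) / z) (Ioi 0) := by
  intro x (hx : 0 < x) y (hy : 0 < y) hxy
  have h := strictConcaveOn_log_Ioi.concaveOn.neg.secant_mono (a := 1) (x := x + 1) (y := y + 1)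
    (by simp) (by simp; linarith) (by simp; linarith) (by simpa using hx.ne')
    (by simpa using hy.ne') (by linarith)
  simpa [neg_div] using h

lemma antitoneOn_add_one_mul_log_add_one_div_sq :
    AntitoneOn (fun z : ℝ => (z + 1) * log (z + 1) / z ^ 2) (Ioi 0) := by
  intro x (hx : 0 < x) y (hy : 0 < y) hxy
  simp only [sq, mul_div_mul_comm]
  have hlog : 0 ≤ log (y + 1) / y := div_nonneg (log_nonneg (by linarith)) hy.le
  have hfactor : (y + 1) / y ≤ (x + 1) / x := by
    rw [div_le_div_iff₀ hy hx]
    linarith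
  exact mul_le_mul hfactor (antitoneOn_log_add_one_div hx hy hxy) hlog (by positivity)

/-- For `φ(z) = 1/((z+1) log(z+1))` and `0 < x < y`:
`y/x ≤ φ(x)/φ(y) ≤ (y/x)²`. -/
theorem stmt13 (x y : ℝ) (hx : 0 < x) (hxy : x < y) :
    y / x ≤ (1 / ((x + 1) * Real.log (x + 1))) / (1 / ((y + 1) * Real.log (y + 1))) ∧
    (1 / ((x + 1) * Real.log (x + 1))) / (1 / ((y + 1) * Real.log (y + 1))) ≤ (y / x) ^ 2 := by
  have hy : 0 < y := hx.trans hxy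
  have hFx : 0 < (x + 1) * log (x + 1) := mul_pos (by linarith) (log_pos (by linarith))
  rw [div_div_div_cancel_left' _ _ one_ne_zero]
  constructor
  · have h := monotoneOn_add_one_mul_log_add_one_div hx hy hxy.le
    rw [div_le_div_iff₀ hx hFx]
    rw [div_le_div_iff₀ hx hy] at h
    linarith
  · have h := antitoneOn_add_one_mul_log_add_one_div_sq hx hy hxy.le
    rw [div_pow, div_le_div_iff₀ hFx (by positivity)]
    rw [div_le_div_iff₀ (by positivity) (by positivity)] at h
    linarith
end

section
/- For all η > 0, it holds that 1 ≤ η·(log(η+1)+1)/((η+1)·log(η+1)) ≤ 2. -/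
/-!
Write `L = log (η + 1)`, which is positive. Clearing the denominator, the lower bound is
`log (η + 1) ≤ η`, and the upper bound is `η ≤ (η + 2) log (η + 1)`, which follows from the
Padé-type estimate `2η / (η + 2) ≤ log (1 + η)`.
-/

open Real

lemma one_le_mul_log_add_one_add_one_div {η : ℝ} (hη : 0 < η) :
    1 ≤ η * (log (η + 1) + 1) / ((η + 1) * log (η + 1)) := by
  have hlog_pos : 0 < log (η + 1) := log_pos (by linarith)
  have hlog_le : log (η + 1) ≤ η := by linarith [log_le_sub_one_of_pos (by linarith : 0 < η + 1)]
  rw [one_le_div (by positivity)]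
  linarith

lemma mul_log_add_one_add_one_div_le_two {η : ℝ} (hη : 0 < η) :
    η * (log (η + 1) + 1) / ((η + 1) * log (η + 1)) ≤ 2 := by
  have hlog_pos : 0 < log (η + 1) := log_pos (by linarith)
  have hpade : 2 * η ≤ log (η + 1) * (η + 2) := by
    have h := le_log_one_add_of_nonneg hη.le
    rwa [add_comm 1 η, div_le_iff₀ (by linarith)] at h
  rw [div_le_iff₀ (by positivity)]
  linarith

/-- For all `η > 0`: `1 ≤ η (log(η+1)+1)/((η+1) log(η+1)) ≤ 2`. -/
theorem stmt14 (η : ℝ) (hη : 0 < η) :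
    1 ≤ η * (Real.log (η + 1) + 1) / ((η + 1) * Real.log (η + 1)) ∧
    η * (Real.log (η + 1) + 1) / ((η + 1) * Real.log (η + 1)) ≤ 2 :=
  ⟨one_le_mul_log_add_one_add_one_div hη, mul_log_add_one_add_one_div_le_two hη⟩
end

section
/- Let ν be a probability distribution on {-1,+1}^n, θ ∈ (0,1), and t, h ≥ 0. For A ⊆ B ⊆ [n] define P^ν_{A,B}(s → s+h) = ∑_{X: X_B = 1} (e^{-s} * ν)^{1_A}(X) · (1-e^{-h})^{|B|-|A|} · (e^{-h})^{|X|_+ - |B|}, where (e^{-s} * ν)^{1_A} is ν tilted by external field e^{-s} and conditioned on all coordinates in A being +1, and |X|_+ is the number of +1 coordinates of X. Then for all B ⊆ [n]: P^ν_{∅,B}(0 → t+h) = ∑_{A ⊆ B} P^ν_{∅,A}(0 → t) · P^ν_{A,B}(t → t+h). -/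
open Finset

/-- The set of `+1` (`true`) coordinates of a configuration. -/
def plusSet {n : ℕ} (X : Fin n → Bool) : Finset (Fin n) :=
  Finset.univ.filter fun i => X i = true

/-- `(e^{-s} * ν)^{1_A}(X)`: the measure `ν` tilted by the external field `e^{-s}`
and conditioned on all coordinates of `A` being `+1`. -/
noncomputable def condTilt {n : ℕ} (ν : (Fin n → Bool) → ℝ) (s : ℝ) (A : Finset (Fin n))
    (X : Fin n → Bool) : ℝ :=
  (if A ⊆ plusSet X then ν X * Real.exp (-s) ^ (plusSet X).card else 0) /
    ∑ Y : Fin n → Bool, if A ⊆ plusSet Y then ν Y * Real.exp (-s) ^ (plusSet Y).card else 0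

/-- `P^ν_{A,B}(s → s+h)`: the transition weight of the negative-field localization
process from pinned set `A` at time `s` to pinned set `B` at time `s+h`. -/
noncomputable def Ptrans {n : ℕ} (ν : (Fin n → Bool) → ℝ) (s h : ℝ)
    (A B : Finset (Fin n)) : ℝ :=
  ∑ X : Fin n → Bool,
    if B ⊆ plusSet X then
      condTilt ν s A X * (1 - Real.exp (-h)) ^ (B.card - A.card) *
        Real.exp (-h) ^ ((plusSet X).card - B.card)
    else 0

lemma binom_aux {n : ℕ} (x y : ℝ) (B : Finset (Fin n)) :
    ∑ A ∈ B.powerset, x ^ A.card * y ^ (B.card - A.card) = (x + y) ^ B.card := by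
  symm
  rw [← Finset.prod_const, Finset.prod_add]
  refine Finset.sum_congr rfl fun A hA => ?_
  rw [Finset.prod_const, Finset.prod_const,
    Finset.card_sdiff_of_subset (Finset.mem_powerset.mp hA)]

/-- Chain rule (semigroup property) of the negative-field localization process:
`P^ν_{∅,B}(0 → t+h) = ∑_{A ⊆ B} P^ν_{∅,A}(0 → t) P^ν_{A,B}(t → t+h)`. -/
theorem stmt17 {n : ℕ} (ν : (Fin n → Bool) → ℝ) (hν0 : ∀ X, 0 ≤ ν X)
    (hν1 : ∑ X, ν X = 1) (θ : ℝ) (hθ : θ ∈ Set.Ioo (0 : ℝ) 1)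
    (t h : ℝ) (ht : 0 ≤ t) (hh : 0 ≤ h) (B : Finset (Fin n)) :
    Ptrans ν 0 (t + h) ∅ B =
      ∑ A ∈ B.powerset, Ptrans ν 0 t ∅ A * Ptrans ν t h A B := by
  set c := Real.exp (-t) with hc
  set d := Real.exp (-h) with hd
  have hc0 : c ≠ 0 := (Real.exp_pos _).ne'
  have hch : Real.exp (-(t + h)) = c * d := by
    rw [hc, hd, ← Real.exp_add]; ring_nf
  have hcond0 : ∀ X : Fin n → Bool, condTilt ν 0 ∅ X = ν X := by
    intro X
    simp [condTilt, hν1]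
  have hL : Ptrans ν 0 (t + h) ∅ B =
      ∑ X : Fin n → Bool, if B ⊆ plusSet X then
        ν X * (1 - c * d) ^ B.card * (c * d) ^ ((plusSet X).card - B.card) else 0 := by
    unfold Ptrans
    refine Finset.sum_congr rfl fun X _ => ?_
    by_cases hX : B ⊆ plusSet X
    · rw [if_pos hX, if_pos hX, hcond0, hch]
      simp
    · rw [if_neg hX, if_neg hX]
  have key : ∀ A ∈ B.powerset,
      Ptrans ν 0 t ∅ A * Ptrans ν t h A B =
      ∑ X : Fin n → Bool, if B ⊆ plusSet X then
        ν X * ((1 - c) ^ A.card * (c * (1 - d)) ^ (B.card - A.card)) *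
          (c * d) ^ ((plusSet X).card - B.card) else 0 := by
    intro A hA
    have hAB : A ⊆ B := Finset.mem_powerset.mp hA
    set E := ∑ Y : Fin n → Bool, if A ⊆ plusSet Y then ν Y * c ^ (plusSet Y).card else 0
      with hE
    by_cases hE0 : E = 0
    · have hzero : ∀ Y : Fin n → Bool, A ⊆ plusSet Y → ν Y = 0 := by
        intro Y hY
        have hnn : ∀ Z ∈ (Finset.univ : Finset (Fin n → Bool)),
            0 ≤ (if A ⊆ plusSet Z then ν Z * c ^ (plusSet Z).card else 0) := by
          intro Z _
          split
          · exact mul_nonneg (hν0 Z) (pow_nonneg (Real.exp_pos _).le _)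
          · exact le_refl 0
        have h0 := (Finset.sum_eq_zero_iff_of_nonneg hnn).mp hE0 Y (Finset.mem_univ Y)
        rw [if_pos hY] at h0
        have hcp : (0:ℝ) < c ^ (plusSet Y).card := pow_pos (Real.exp_pos _) _
        rcases mul_eq_zero.mp h0 with h' | h'
        · exact h'
        · exact absurd h' hcp.ne'
      have h1 : Ptrans ν 0 t ∅ A = 0 := by
        unfold Ptrans
        refine Finset.sum_eq_zero fun X _ => ?_
        by_cases hX : A ⊆ plusSet X
        · rw [if_pos hX, hcond0, hzero X hX]; ring
        · rw [if_neg hX]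
      rw [h1, zero_mul]
      symm
      refine Finset.sum_eq_zero fun X _ => ?_
      by_cases hX : B ⊆ plusSet X
      · rw [if_pos hX, hzero X (hAB.trans hX)]; ring
      · rw [if_neg hX]
    · have h1 : Ptrans ν 0 t ∅ A = (1 - c) ^ A.card * (E / c ^ A.card) := by
        rw [hE, Finset.sum_div, Finset.mul_sum]
        unfold Ptrans
        refine Finset.sum_congr rfl fun X _ => ?_
        by_cases hX : A ⊆ plusSet X
        · rw [if_pos hX, if_pos hX, hcond0]
          have hle : A.card ≤ (plusSet X).card := Finset.card_le_card hX
          rw [Finset.card_empty, Nat.sub_zero, pow_sub₀ c hc0 hle]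
          ring
        · rw [if_neg hX, if_neg hX]
          simp
      have h2 : Ptrans ν t h A B = (∑ X : Fin n → Bool, if B ⊆ plusSet X then
          ν X * c ^ (plusSet X).card *
            ((1 - d) ^ (B.card - A.card) * d ^ ((plusSet X).card - B.card)) else 0) / E := by
        rw [Finset.sum_div]
        unfold Ptrans condTilt
        simp only [← hc, ← hd, ← hE]
        refine Finset.sum_congr rfl fun X _ => ?_
        by_cases hX : B ⊆ plusSet X
        · rw [if_pos hX, if_pos hX, if_pos (hAB.trans hX)]
          ring
        · rw [if_neg hX, if_neg hX, zero_div]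
      rw [h1, h2]
      set S := ∑ X : Fin n → Bool, if B ⊆ plusSet X then
          ν X * c ^ (plusSet X).card *
            ((1 - d) ^ (B.card - A.card) * d ^ ((plusSet X).card - B.card)) else 0 with hS
      have hstep : (1 - c) ^ A.card * (E / c ^ A.card) * (S / E)
          = (1 - c) ^ A.card / c ^ A.card * S := by
        field_simp
      rw [hstep, hS, Finset.mul_sum]
      refine Finset.sum_congr rfl fun X _ => ?_
      by_cases hX : B ⊆ plusSet X
      · rw [if_pos hX, if_pos hX]
        have hk : B.card ≤ (plusSet X).card := Finset.card_le_card hX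
        have hab : A.card ≤ B.card := Finset.card_le_card hAB
        have e : c ^ (plusSet X).card
            = c ^ A.card * (c ^ (B.card - A.card) * c ^ ((plusSet X).card - B.card)) := by
          rw [← pow_add, ← pow_add]
          congr 1
          omega
        rw [e, mul_pow, mul_pow]
        field_simp
      · rw [if_neg hX, if_neg hX]
        simp
  rw [hL, Finset.sum_congr rfl key, Finset.sum_comm]
  refine Finset.sum_congr rfl fun X _ => ?_
  by_cases hX : B ⊆ plusSet X
  · simp only [if_pos hX]
    symm
    have hbin := binom_aux (1 - c) (c * (1 - d)) B
    have hsum : (1 - c) + c * (1 - d) = 1 - c * d := by ring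
    rw [hsum] at hbin
    calc ∑ A ∈ B.powerset,
          ν X * ((1 - c) ^ A.card * (c * (1 - d)) ^ (B.card - A.card)) *
            (c * d) ^ ((plusSet X).card - B.card)
        = (∑ A ∈ B.powerset, (1 - c) ^ A.card * (c * (1 - d)) ^ (B.card - A.card)) *
            (ν X * (c * d) ^ ((plusSet X).card - B.card)) := by
          rw [Finset.sum_mul]
          exact Finset.sum_congr rfl fun A _ => by ring
      _ = ν X * (1 - c * d) ^ B.card * (c * d) ^ ((plusSet X).card - B.card) := by
          rw [hbin]; ring
  · simp [hX]
end
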